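/- Let f = h + conj(g) be a harmonic mapping on the unit disk 𝔻 that omits at least one value in ℂ. Suppose there exists α ∈ (0,1) such that for all r ∈ (0,1) and all σ ∈ Aut(𝔻), setting Ω = σ(D(0,r)), the average of |h′| + |g′| over the boundary ∂Ω with respect to arclength satisfies (1/length(∂Ω))·∫_{∂Ω} (|h′(ζ)| + |g′(ζ)|) |dζ| ≤ r^{−α}. Then f is normal, i.e. ‖f‖_n < ∞. -/

import Mathlib

open Complex Metric Set ENNReal Filter

noncomputable section

/-- The open unit disk in the complex plane. -/
def unitDisk : Set ℂ := Metric.ball (0 : ℂ) 1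

notation "𝔻" => unitDisk

/-- The chordal distance on ℂ. -/
def chordal (z w : ℂ) : ℝ :=
  Norm.norm (z - w) /
    (Real.sqrt (1 + Norm.norm z ^ 2) * Real.sqrt (1 + Norm.norm w ^ 2))

/-- The hyperbolic distance on the unit disk. -/
def hypDist (z w : ℂ) : ℝ :=
  (1 / 2) * Real.log
    ((1 + Norm.norm ((z - w) / (1 - (starRingEnd ℂ) z * w))) /
     (1 - Norm.norm ((z - w) / (1 - (starRingEnd ℂ) z * w))))

/-- The harmonic mapping `f = h + conj g`. -/
def harmMap (h g : ℂ → ℂ) : ℂ → ℂ := fun z => h z + (starRingEnd ℂ) (g z)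

/-- The quantity `(1 - |z|²) (|h'(z)| + |g'(z)|) / (1 + |f(z)|²)` for `f = h + conj g`. -/
def nQuot (h g : ℂ → ℂ) (z : ℂ) : ℝ :=
  (1 - Norm.norm z ^ 2) * (Norm.norm (deriv h z) + Norm.norm (deriv g z)) /
    (1 + Norm.norm (harmMap h g z) ^ 2)

/-- `‖f‖ₙ`, the normality norm of the harmonic mapping `f = h + conj g`,
as an element of `[0, ∞]`. -/
def harmNorm (h g : ℂ → ℂ) : ℝ≥0∞ :=
  ⨆ z ∈ 𝔻, ENNReal.ofReal (nQuot h g z)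

/-- `φ` is a conformal automorphism of the unit disk. -/
def IsDiskAut (φ : ℂ → ℂ) : Prop :=
  DifferentiableOn ℂ φ 𝔻 ∧ Set.MapsTo φ 𝔻 𝔻 ∧
    ∃ ψ : ℂ → ℂ, DifferentiableOn ℂ ψ 𝔻 ∧ Set.MapsTo ψ 𝔻 𝔻 ∧
      (∀ z ∈ 𝔻, ψ (φ z) = z) ∧ (∀ z ∈ 𝔻, φ (ψ z) = z)

/-!
The circle average in the hypothesis is an honest Euclidean circle average, so by the mean value
property of the holomorphic functions `h'` and `g'` it bounds `|h'(c)| + |g'(c)|` at the Euclidean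
centre `c` of `σ(D(0, r))`. For fixed `r` these centres already fill the disk as `σ` runs over the
automorphisms `w ↦ (w + a) / (1 + ā w)`, so `|h'| + |g'| ≤ 2 ^ α` on `𝔻` (taking `r = 1/2`), and
the factor `(1 - |z|²) / (1 + |f(z)|²)` is at most `1`.
-/

open scoped ComplexConjugate

lemma mem_unitDisk {z : ℂ} : z ∈ 𝔻 ↔ ‖z‖ < 1 := mem_ball_zero_iff

def diskMobius (a w : ℂ) : ℂ := (w + a) / (1 + conj a * w)

section Mobius

variable {a w ζ : ℂ}

lemma norm_one_add_conj_mul_sq_sub_norm_add_sq (a w : ℂ) :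
    ‖1 + conj a * w‖ ^ 2 - ‖w + a‖ ^ 2 = (1 - ‖a‖ ^ 2) * (1 - ‖w‖ ^ 2) := by
  simp only [Complex.sq_norm, Complex.normSq_apply, Complex.add_re, Complex.add_im,
    Complex.mul_re, Complex.mul_im, Complex.conj_re, Complex.conj_im, Complex.one_re,
    Complex.one_im]
  ring

lemma one_add_conj_mul_ne_zero (ha : ‖a‖ < 1) (hw : ‖w‖ ≤ 1) : 1 + conj a * w ≠ 0 := by
  intro h0
  have : ‖conj a * w‖ = 1 := by rw [eq_neg_of_add_eq_zero_right h0, norm_neg, norm_one]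
  rw [norm_mul, Complex.norm_conj] at this
  nlinarith [norm_nonneg a, norm_nonneg w]

lemma one_sub_conj_mul_ne_zero (ha : ‖a‖ < 1) (hζ : ‖ζ‖ ≤ 1) : 1 - conj a * ζ ≠ 0 := by
  simpa [sub_eq_add_neg] using one_add_conj_mul_ne_zero (a := -a) (by rwa [norm_neg]) hζ

lemma diskMobius_mapsTo (ha : ‖a‖ < 1) : MapsTo (diskMobius a) 𝔻 𝔻 := by
  intro w hw
  rw [mem_unitDisk] at hw ⊢
  have hden := one_add_conj_mul_ne_zero ha hw.le
  rw [diskMobius, norm_div, div_lt_one (norm_pos_iff.2 hden), ← sq_lt_sq₀ (by positivity)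
    (by positivity), ← sub_pos, norm_one_add_conj_mul_sq_sub_norm_add_sq]
  exact mul_pos (by nlinarith [norm_nonneg a]) (by nlinarith [norm_nonneg w])

lemma differentiableOn_diskMobius (ha : ‖a‖ < 1) : DifferentiableOn ℂ (diskMobius a) 𝔻 :=
  fun w hw ↦
    have hden := one_add_conj_mul_ne_zero ha (mem_unitDisk.1 hw).le
    (show DifferentiableAt ℂ (fun w ↦ (w + a) / (1 + conj a * w)) w by
      fun_prop (disch := exact hden)).differentiableWithinAt

lemma diskMobius_neg_diskMobius (ha : ‖a‖ < 1) (hw : w ∈ 𝔻) :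
    diskMobius (-a) (diskMobius a w) = w := by
  have hζ : diskMobius a w * (1 + conj a * w) = w + a :=
    div_mul_cancel₀ _ (one_add_conj_mul_ne_zero ha (mem_unitDisk.1 hw).le)
  have hden := one_sub_conj_mul_ne_zero ha (mem_unitDisk.1 (diskMobius_mapsTo ha hw)).le
  rw [diskMobius, map_neg, neg_mul, ← sub_eq_add_neg, ← sub_eq_add_neg, div_eq_iff hden]
  linear_combination hζ

lemma diskMobius_diskMobius_neg (ha : ‖a‖ < 1) (hζ : ζ ∈ 𝔻) :
    diskMobius a (diskMobius (-a) ζ) = ζ := by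
  simpa using diskMobius_neg_diskMobius (a := -a) (by rwa [norm_neg]) hζ

lemma isDiskAut_diskMobius (ha : ‖a‖ < 1) : IsDiskAut (diskMobius a) :=
  have ha' : ‖-a‖ < 1 := by rwa [norm_neg]
  ⟨differentiableOn_diskMobius ha, diskMobius_mapsTo ha, diskMobius (-a),
    differentiableOn_diskMobius ha', diskMobius_mapsTo ha',
    fun _ ↦ diskMobius_neg_diskMobius ha, fun _ ↦ diskMobius_diskMobius_neg ha⟩

lemma norm_diskMobius_neg (ζ : ℂ) : ‖diskMobius (-a) ζ‖ = ‖ζ - a‖ / ‖1 - conj a * ζ‖ := by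
  simp [diskMobius, sub_eq_add_neg]

end Mobius

def mobiusCenter (a : ℂ) (r : ℝ) : ℂ := ((1 - r ^ 2) / (1 - r ^ 2 * ‖a‖ ^ 2) : ℝ) * a

def mobiusRadius (a : ℂ) (r : ℝ) : ℝ := r * (1 - ‖a‖ ^ 2) / (1 - r ^ 2 * ‖a‖ ^ 2)

section MobiusBall

variable {a ζ : ℂ} {r : ℝ}

lemma norm_sub_sq_sub_mul_norm_sq (hD : 1 - r ^ 2 * ‖a‖ ^ 2 ≠ 0) :
    ‖ζ - a‖ ^ 2 - r ^ 2 * ‖1 - conj a * ζ‖ ^ 2 =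
      (1 - r ^ 2 * ‖a‖ ^ 2) * (‖ζ - mobiusCenter a r‖ ^ 2 - mobiusRadius a r ^ 2) := by
  have hN : ‖a‖ ^ 2 = a.re ^ 2 + a.im ^ 2 := by rw [Complex.sq_norm, Complex.normSq_apply]; ring
  unfold mobiusCenter mobiusRadius
  rw [hN] at hD ⊢
  simp only [Complex.sq_norm, Complex.normSq_apply, Complex.sub_re, Complex.sub_im,
    Complex.mul_re, Complex.mul_im, Complex.conj_re, Complex.conj_im, Complex.ofReal_re,
    Complex.ofReal_im, Complex.one_re, Complex.one_im]
  field_simp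
  ring

lemma one_sub_sq_mul_norm_sq_pos (ha : ‖a‖ < 1) (hr0 : 0 < r) (hr1 : r < 1) :
    0 < 1 - r ^ 2 * ‖a‖ ^ 2 := by
  have : r * ‖a‖ < 1 := by nlinarith [norm_nonneg a]
  nlinarith [mul_nonneg hr0.le (norm_nonneg a)]

lemma mobiusRadius_pos (ha : ‖a‖ < 1) (hr0 : 0 < r) (hr1 : r < 1) : 0 < mobiusRadius a r :=
  div_pos (mul_pos hr0 (by nlinarith [norm_nonneg a]))
    (one_sub_sq_mul_norm_sq_pos ha hr0 hr1)

lemma norm_mobiusCenter_add_mobiusRadius_lt_one (ha : ‖a‖ < 1) (hr0 : 0 < r) (hr1 : r < 1) :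
    ‖mobiusCenter a r‖ + mobiusRadius a r < 1 := by
  have hD := one_sub_sq_mul_norm_sq_pos ha hr0 hr1
  rw [mobiusCenter, mobiusRadius, norm_mul, Complex.norm_real,
    Real.norm_of_nonneg (div_nonneg (by nlinarith) hD.le), div_mul_eq_mul_div, ← add_div,
    div_lt_one hD]
  nlinarith [mul_pos (mul_pos (sub_pos.2 hr1) (sub_pos.2 ha))
    (by nlinarith [norm_nonneg a] : 0 < 1 - r * ‖a‖)]

lemma closedBall_mobiusCenter_subset_unitDisk (ha : ‖a‖ < 1) (hr0 : 0 < r) (hr1 : r < 1) :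
    closedBall (mobiusCenter a r) (mobiusRadius a r) ⊆ 𝔻 := fun ζ hζ ↦ mem_unitDisk.2 <| calc
  ‖ζ‖ ≤ ‖mobiusCenter a r‖ + ‖ζ - mobiusCenter a r‖ := norm_le_norm_add_norm_sub' _ _
  _ < 1 := by linarith [mem_closedBall_iff_norm.1 hζ,
    norm_mobiusCenter_add_mobiusRadius_lt_one ha hr0 hr1]

lemma norm_sub_lt_mul_norm_iff (ha : ‖a‖ < 1) (hr0 : 0 < r) (hr1 : r < 1) :
    ‖ζ - a‖ < r * ‖1 - conj a * ζ‖ ↔ ‖ζ - mobiusCenter a r‖ < mobiusRadius a r := by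
  have hD := one_sub_sq_mul_norm_sq_pos ha hr0 hr1
  have hid := norm_sub_sq_sub_mul_norm_sq (ζ := ζ) hD.ne'
  rw [← sq_lt_sq₀ (norm_nonneg _) (by positivity),
    ← sq_lt_sq₀ (norm_nonneg _) (mobiusRadius_pos ha hr0 hr1).le]
  constructor <;> intro h <;> nlinarith

lemma diskMobius_image_ball (ha : ‖a‖ < 1) (hr0 : 0 < r) (hr1 : r < 1) :
    diskMobius a '' ball 0 r = ball (mobiusCenter a r) (mobiusRadius a r) := by
  ext ζ
  rw [mem_ball, dist_eq_norm]
  constructor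
  · rintro ⟨w, hw, rfl⟩
    have hw1 : w ∈ 𝔻 := ball_subset_ball hr1.le hw
    have hden := one_sub_conj_mul_ne_zero ha (mem_unitDisk.1 (diskMobius_mapsTo ha hw1)).le
    rw [mem_ball_zero_iff, ← diskMobius_neg_diskMobius ha hw1, norm_diskMobius_neg,
      div_lt_iff₀ (norm_pos_iff.2 hden)] at hw
    exact (norm_sub_lt_mul_norm_iff ha hr0 hr1).1 hw
  · intro hζ
    have hζ1 : ζ ∈ 𝔻 := closedBall_mobiusCenter_subset_unitDisk ha hr0 hr1
      (ball_subset_closedBall (mem_ball_iff_norm.2 hζ))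
    have hden := one_sub_conj_mul_ne_zero ha (mem_unitDisk.1 hζ1).le
    refine ⟨diskMobius (-a) ζ, ?_, diskMobius_diskMobius_neg ha hζ1⟩
    rw [mem_ball_zero_iff, norm_diskMobius_neg, div_lt_iff₀ (norm_pos_iff.2 hden)]
    exact (norm_sub_lt_mul_norm_iff ha hr0 hr1).2 hζ

lemma exists_mobiusCenter_eq (hr0 : 0 < r) (hr1 : r < 1) {z : ℂ} (hz : ‖z‖ < 1) :
    ∃ a : ℂ, ‖a‖ < 1 ∧ mobiusCenter a r = z := by
  rcases eq_or_ne z 0 with rfl | hz0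
  · exact ⟨0, by simp, by simp [mobiusCenter]⟩
  set φ : ℝ → ℝ := fun s ↦ s * (1 - r ^ 2) / (1 - r ^ 2 * s ^ 2) with hφ
  have hφcont : ContinuousOn φ (Icc 0 1) :=
    ContinuousOn.div (by fun_prop) (by fun_prop) fun s hs ↦ by
      nlinarith [pow_le_one₀ (n := 2) hs.1 hs.2, sq_nonneg r]
  have hφ1 : φ 1 = 1 := by
    simp only [hφ, one_pow, mul_one, one_mul]
    exact div_self (by nlinarith)
  obtain ⟨s, ⟨hs0, hs1⟩, hφs⟩ :=
    intermediate_value_Icc zero_le_one hφcont ⟨by simp [hφ], hφ1 ▸ hz.le⟩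
  have hs1 : s < 1 := hs1.lt_of_ne (by rintro rfl; rw [hφ1] at hφs; linarith)
  have hzpos : 0 < ‖z‖ := norm_pos_iff.2 hz0
  have hnorm : ‖((s / ‖z‖ : ℝ) : ℂ) * z‖ = s := by
    rw [norm_mul, Complex.norm_real, Real.norm_of_nonneg (by positivity),
      div_mul_cancel₀ _ hzpos.ne']
  refine ⟨(s / ‖z‖ : ℝ) * z, by rwa [hnorm], ?_⟩
  rw [mobiusCenter, hnorm, ← mul_assoc, ← Complex.ofReal_mul]
  convert one_mul z
  rw [← Complex.ofReal_one, Complex.ofReal_inj, ← mul_div_assoc,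
    div_eq_one_iff_eq hzpos.ne', ← hφs, hφ]
  ring

end MobiusBall

lemma exists_isDiskAut_image_ball_eq_ball {r : ℝ} (hr0 : 0 < r) (hr1 : r < 1) {z : ℂ}
    (hz : z ∈ 𝔻) : ∃ σ : ℂ → ℂ, ∃ t : ℝ, IsDiskAut σ ∧ 0 < t ∧
      σ '' ball 0 r = ball z t ∧ closedBall z t ⊆ 𝔻 := by
  obtain ⟨a, ha, rfl⟩ := exists_mobiusCenter_eq hr0 hr1 (mem_unitDisk.1 hz)
  refine ⟨diskMobius a, mobiusRadius a r, isDiskAut_diskMobius ha, mobiusRadius_pos ha hr0 hr1,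
    diskMobius_image_ball ha hr0 hr1, closedBall_mobiusCenter_subset_unitDisk ha hr0 hr1⟩

section MeanValue

variable {E : Type*} [NormedAddCommGroup E] [NormedSpace ℂ E] [CompleteSpace E]

lemma norm_le_circleAverage_norm {f : ℂ → E} {c : ℂ} {R : ℝ}
    (hf : DiffContOnCl ℂ f (ball c |R|)) : ‖f c‖ ≤ Real.circleAverage (‖f ·‖) c R := by
  rw [← hf.circleAverage, Real.circleAverage_def, Real.circleAverage_def, norm_smul,
    Real.norm_of_nonneg (by positivity), smul_eq_mul]
  gcongr
  exact intervalIntegral.norm_integral_le_integral_norm (by positivity)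

lemma norm_add_norm_le_circleAverage {f₁ f₂ : ℂ → E} {c : ℂ} {R : ℝ} (hR : 0 < R)
    (hf₁ : DiffContOnCl ℂ f₁ (ball c R)) (hf₂ : DiffContOnCl ℂ f₂ (ball c R)) :
    ‖f₁ c‖ + ‖f₂ c‖ ≤ Real.circleAverage (fun z ↦ ‖f₁ z‖ + ‖f₂ z‖) c R := by
  have hsphere : sphere c R ⊆ closure (ball c R) := by
    rw [closure_ball c hR.ne']
    exact sphere_subset_closedBall
  have hcirc (f : ℂ → E) (hf : DiffContOnCl ℂ f (ball c R)) : CircleIntegrable (‖f ·‖) c R :=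
    (hf.continuousOn.norm.mono hsphere).circleIntegrable hR.le
  rw [Real.circleAverage_fun_add (hcirc f₁ hf₁) (hcirc f₂ hf₂)]
  rw [← abs_of_pos hR] at hf₁ hf₂
  exact add_le_add (norm_le_circleAverage_norm hf₁) (norm_le_circleAverage_norm hf₂)

end MeanValue

lemma nQuot_le_norm_deriv_add_norm_deriv {h g : ℂ → ℂ} {z : ℂ} (hz : z ∈ 𝔻) :
    nQuot h g z ≤ ‖deriv h z‖ + ‖deriv g z‖ := by
  have hz1 := mem_unitDisk.1 hz
  unfold nQuot
  have hz2 : 0 ≤ 1 - ‖z‖ ^ 2 := by nlinarith [norm_nonneg z]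
  calc _ ≤ (1 - ‖z‖ ^ 2) * (‖deriv h z‖ + ‖deriv g z‖) :=
        div_le_self (by positivity) (by nlinarith [norm_nonneg (harmMap h g z)])
    _ ≤ _ := mul_le_of_le_one_left (by positivity) (by nlinarith [norm_nonneg z])

lemma harmNorm_lt_top_of_forall_le {h g : ℂ → ℂ} {M : ℝ}
    (hM : ∀ z ∈ 𝔻, ‖deriv h z‖ + ‖deriv g z‖ ≤ M) : harmNorm h g < ⊤ :=
  (iSup₂_le fun z hz ↦ ENNReal.ofReal_le_ofReal
    ((nQuot_le_norm_deriv_add_norm_deriv hz).trans (hM z hz))).trans_lt ENNReal.ofReal_lt_top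

theorem normal_of_integral_condition_general (h g : ℂ → ℂ)
    (hh : DifferentiableOn ℂ h 𝔻) (hg : DifferentiableOn ℂ g 𝔻)
    (α : ℝ)
    (hint : ∀ r ∈ Set.Ioo (0 : ℝ) 1, ∀ σ : ℂ → ℂ, IsDiskAut σ →
      ∀ (c : ℂ) (t : ℝ), 0 < t → σ '' Metric.ball (0 : ℂ) r = Metric.ball c t →
        (1 / (2 * Real.pi)) * ∫ θ in (0 : ℝ)..(2 * Real.pi),
            (Norm.norm (deriv h (c + t * Complex.exp (θ * Complex.I))) +
             Norm.norm (deriv g (c + t * Complex.exp (θ * Complex.I))))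
          ≤ r ^ (-α)) :
    harmNorm h g < ⊤ := by
  refine harmNorm_lt_top_of_forall_le (M := (1 / 2 : ℝ) ^ (-α)) fun z hz ↦ ?_
  obtain ⟨σ, t, hσ, ht, hσball, hsub⟩ :=
    exists_isDiskAut_image_ball_eq_ball (r := 1 / 2) (by norm_num) (by norm_num) hz
  have hderiv {F : ℂ → ℂ} (hF : DifferentiableOn ℂ F 𝔻) :
      DiffContOnCl ℂ (deriv F) (ball z t) :=
    (hF.deriv isOpen_ball).diffContOnCl_ball hsub
  calc ‖deriv h z‖ + ‖deriv g z‖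
      ≤ Real.circleAverage (fun ζ ↦ ‖deriv h ζ‖ + ‖deriv g ζ‖) z t :=
        norm_add_norm_le_circleAverage ht (hderiv hh) (hderiv hg)
    _ ≤ (1 / 2 : ℝ) ^ (-α) := by
      rw [Real.circleAverage_def, smul_eq_mul, ← one_div]
      exact hint _ ⟨by norm_num, by norm_num⟩ σ hσ z t ht hσball

theorem normal_of_integral_condition (h g : ℂ → ℂ)
    (hh : DifferentiableOn ℂ h 𝔻) (hg : DifferentiableOn ℂ g 𝔻)
    (homit : ∃ w₀ : ℂ, ∀ z ∈ 𝔻, harmMap h g z ≠ w₀)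
    (α : ℝ) (hα : α ∈ Set.Ioo (0 : ℝ) 1)
    (hint : ∀ r ∈ Set.Ioo (0 : ℝ) 1, ∀ σ : ℂ → ℂ, IsDiskAut σ →
      ∀ (c : ℂ) (t : ℝ), 0 < t → σ '' Metric.ball (0 : ℂ) r = Metric.ball c t →
        (1 / (2 * Real.pi)) * ∫ θ in (0 : ℝ)..(2 * Real.pi),
            (Norm.norm (deriv h (c + t * Complex.exp (θ * Complex.I))) +
             Norm.norm (deriv g (c + t * Complex.exp (θ * Complex.I))))
          ≤ r ^ (-α)) :
    harmNorm h g < ⊤ :=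
  normal_of_integral_condition_general h g hh hg α hint
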